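/- arXiv:1510.07161 — 3 statements merged into one kernel-verified Lean document; each statement's English description precedes it below -/
import Mathlib

section
/- Let X be a compact metric space and C ⊆ X a closed set that is invariant under every homeomorphism of X (h(C) = C for all h ∈ H(X)). For every ε > 0 and every f ∈ H(X) there exists δ > 0 such that f·B_δ·f⁻¹ ⊆ B_ε, where B_η = {h ∈ H(X) : d(h(x),x) < η and d(h⁻¹(x),x) < η for all x with d(x,C) ≥ η}. -/
open Pointwise

/-- The group of self-homeomorphisms of `X`, with `f * g = f ∘ g`. -/
instance homeoGroup {X : Type*} [TopologicalSpace X] : Group (X ≃ₜ X) where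
  mul f g := g.trans f
  one := Homeomorph.refl X
  inv := Homeomorph.symm
  mul_assoc f g h := Homeomorph.ext fun _ => rfl
  one_mul f := Homeomorph.ext fun _ => rfl
  mul_one f := Homeomorph.ext fun _ => rfl
  inv_mul_cancel f := Homeomorph.ext fun x => f.symm_apply_apply x

/-- `B_ε`: homeomorphisms `h` with `d(h x, x) < ε` and `d(h⁻¹ x, x) < ε`
for all `x` outside the `ε`-neighborhood `C_ε = {x | d(x,C) < ε}` of `C`. -/
def Bset {X : Type*} [MetricSpace X] (C : Set X) (ε : ℝ) : Set (X ≃ₜ X) :=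
  {h | ∀ x : X, ε ≤ Metric.infDist x C → dist (h x) x < ε ∧ dist (h.symm x) x < ε}
theorem Bset_conj_subset {X : Type*} [MetricSpace X] [CompactSpace X]
    (C : Set X) (hC : IsClosed C) (hinv : ∀ h : X ≃ₜ X, h '' C = C) :
    ∀ ε : ℝ, 0 < ε → ∀ f : X ≃ₜ X, ∃ δ > 0,
      (fun g => f * g * f⁻¹) '' Bset C δ ⊆ Bset C ε := by
  intro ε hε f
  obtain ⟨η, hη, hη'⟩ := Metric.uniformContinuous_iff.mp
    (CompactSpace.uniformContinuous_of_continuous f.continuous) ε hε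
  set K := {x : X | ε ≤ Metric.infDist x C} with hKdef
  have hKclosed : IsClosed K :=
    isClosed_le continuous_const (Metric.continuous_infDist_pt C)
  have hKcompact : IsCompact K := hKclosed.isCompact
  rcases K.eq_empty_or_nonempty with hKe | hne
  · refine ⟨ε, hε, ?_⟩
    rintro h ⟨g, hg, rfl⟩ x hx
    exact absurd (Set.eq_empty_iff_forall_notMem.mp hKe x) (by exact fun h' => h' hx)
  · have hCn : C.Nonempty := by
      by_contra hc
      obtain ⟨x, hx⟩ := hne
      rw [Set.not_nonempty_iff_eq_empty] at hc
      simp only [hKdef, Set.mem_setOf_eq, hc, Metric.infDist_empty] at hx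
      linarith
    have hφ : Continuous fun x => Metric.infDist (f.symm x) C :=
      (Metric.continuous_infDist_pt C).comp f.symm.continuous
    obtain ⟨x0, hx0K, hmin⟩ := hKcompact.exists_isMinOn hne hφ.continuousOn
    have hm : 0 < Metric.infDist (f.symm x0) C := by
      rw [← hC.notMem_iff_infDist_pos hCn]
      intro hmem
      have : x0 ∈ C := by
        have := (hinv f) ▸ Set.mem_image_of_mem f hmem
        simpa using this
      have h0 : Metric.infDist x0 C = 0 := by
        simp [Metric.infDist_zero_of_mem this]
      have := hx0K
      simp only [hKdef, Set.mem_setOf_eq, h0] at this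
      linarith
    set m := Metric.infDist (f.symm x0) C
    refine ⟨min η m, lt_min hη hm, ?_⟩
    rintro h ⟨g, hg, rfl⟩ x hx
    have hxK : x ∈ K := hx
    have h1 : min η m ≤ Metric.infDist (f.symm x) C :=
      le_trans (min_le_right _ _) (hmin hxK)
    obtain ⟨hg1, hg2⟩ := hg (f.symm x) h1
    constructor
    · have := hη' (lt_of_lt_of_le hg1 (min_le_left _ _))
      have heq : (f * g * f⁻¹) x = f (g (f.symm x)) := rfl
      rw [heq]
      simpa using this
    · have := hη' (lt_of_lt_of_le hg2 (min_le_left _ _))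
      have heq : (f * g * f⁻¹).symm x = f (g.symm (f.symm x)) := rfl
      rw [heq]
      simpa using this
end

section
/- Let X be a topological space, U ⊆ X open, and let p be a homeomorphism of X, not the identity, with Move(p) ⊆ U, where Move(h) = {x : h(x) ≠ x}. Suppose V ⊆ U is open with p(V) ∩ V = ∅, and q is a homeomorphism with Move(q) ⊆ V and q(x) ≠ x for some x ∈ V. Then p and q do not commute. -/
/-- The set of points moved by a homeomorphism. -/
def Move {X : Type*} [TopologicalSpace X] (h : X ≃ₜ X) : Set X := {x | h x ≠ x}

/-- If `p ≠ id` has support in `U`, `V ⊆ U` is open with `p(V) ∩ V = ∅`, and the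
homeomorphism `q` has support in `V` and moves some point of `V`, then `p` and `q`
do not commute. -/
theorem not_commute_of_supports {X : Type*} [TopologicalSpace X]
    (U V : Set X) (hU : IsOpen U) (hV : IsOpen V) (hVU : V ⊆ U)
    (p : X ≃ₜ X) (hp : p ≠ Homeomorph.refl X) (hpU : Move p ⊆ U)
    (hdisj : (p '' V) ∩ V = ∅)
    (q : X ≃ₜ X) (hqV : Move q ⊆ V) (hq : ∃ x ∈ V, q x ≠ x) :
    p.trans q ≠ q.trans p := by
  obtain ⟨x, hxV, hqx⟩ := hq
  intro h
  have hx : (p.trans q) x = (q.trans p) x := by rw [h]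
  simp only [Homeomorph.trans_apply] at hx
  have hpxV : p x ∉ V := fun hmem => Set.eq_empty_iff_forall_notMem.mp hdisj (p x)
    ⟨Set.mem_image_of_mem p hxV, hmem⟩
  have hqpx : q (p x) = p x := by
    by_contra hne
    exact hpxV (hqV hne)
  rw [hqpx] at hx
  exact hqx (p.injective hx.symm)
end

section
/- Let (X,d) be a compact metric space and suppose x₁, x₂ ∈ C ⊆ X are distinct points such that each xᵢ is the limit of a sequence of pairwise disjoint clopen subsets Sₙⁱ of X, each homeomorphic to the circle S¹, with diam(Sₙⁱ) → 0 and d-distance from Sₙⁱ to xᵢ tending to 0. Then for ε = d(x₁,x₂)/2 and every δ with 0 < δ ≤ ε there exists a homeomorphism h of X which is the identity outside {x : d(x,C) < δ} but moves some point a distance at least ε. -/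
/-!
Pick one circle near `x₀` and one near `x₁`, both inside the `δ/2`-balls around these points,
and let `h` exchange them by a homeomorphism and fix everything else. Since the circles are
clopen this is a homeomorphism of `X`; it is the identity away from the `δ`-neighbourhood of `C`,
and it carries a point within `δ/2` of `x₀` to a point within `δ/2` of `x₁`, so it moves that
point by at least `d(x₀, x₁) - δ ≥ d(x₀, x₁)/2`.
-/

open Filter Metric Set Topology

section SwapVia

variable {α : Type*} {A B : Set α}

open Classical in
noncomputable def swapVia (g : A ≃ B) (y : α) : α :=
  if hA : y ∈ A then g ⟨y, hA⟩ else if hB : y ∈ B then g.symm ⟨y, hB⟩ else y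

theorem swapVia_of_mem_left (g : A ≃ B) {y : α} (hy : y ∈ A) : swapVia g y = g ⟨y, hy⟩ :=
  dif_pos hy

theorem swapVia_of_mem_right (hAB : Disjoint A B) (g : A ≃ B) {y : α} (hy : y ∈ B) :
    swapVia g y = g.symm ⟨y, hy⟩ := by
  rw [swapVia, dif_neg (hAB.notMem_of_mem_right hy), dif_pos hy]

theorem swapVia_of_notMem (g : A ≃ B) {y : α} (hA : y ∉ A) (hB : y ∉ B) : swapVia g y = y := by
  rw [swapVia, dif_neg hA, dif_neg hB]

theorem swapVia_involutive (hAB : Disjoint A B) (g : A ≃ B) : Function.Involutive (swapVia g) := by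
  intro y
  by_cases hA : y ∈ A
  · rw [swapVia_of_mem_left g hA, swapVia_of_mem_right hAB g (g ⟨y, hA⟩).2]
    simp
  by_cases hB : y ∈ B
  · rw [swapVia_of_mem_right hAB g hB, swapVia_of_mem_left g (g.symm ⟨y, hB⟩).2]
    simp
  rw [swapVia_of_notMem g hA hB, swapVia_of_notMem g hA hB]

variable [TopologicalSpace α]

theorem continuous_swapVia (hA : IsClopen A) (hB : IsClopen B) (hAB : Disjoint A B)
    (g : A ≃ₜ B) : Continuous (swapVia g.toEquiv) := by
  have onA : ContinuousOn (swapVia g.toEquiv) A :=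
    continuousOn_iff_continuous_domRestrict.2 <| (continuous_subtype_val.comp g.continuous).congr
      fun y => (swapVia_of_mem_left g.toEquiv y.2).symm
  have onB : ContinuousOn (swapVia g.toEquiv) B :=
    continuousOn_iff_continuous_domRestrict.2 <|
      (continuous_subtype_val.comp g.symm.continuous).congr
        fun y => (swapVia_of_mem_right hAB g.toEquiv y.2).symm
  have onRest : ContinuousOn (swapVia g.toEquiv) (A ∪ B)ᶜ :=
    continuousOn_id.congr fun y hy =>
      swapVia_of_notMem g.toEquiv (fun h => hy (.inl h)) (fun h => hy (.inr h))
  rw [← continuousOn_univ, ← union_compl_self (A ∪ B)]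
  exact (onA.union_of_isOpen onB hA.isOpen hB.isOpen).union_of_isOpen onRest
    (hA.isOpen.union hB.isOpen) (hA.isClosed.union hB.isClosed).isOpen_compl

noncomputable def Homeomorph.swapVia (hA : IsClopen A) (hB : IsClopen B) (hAB : Disjoint A B)
    (g : A ≃ₜ B) : α ≃ₜ α where
  toEquiv := (swapVia_involutive hAB g.toEquiv).toPerm
  continuous_toFun := continuous_swapVia hA hB hAB g
  continuous_invFun := continuous_swapVia hA hB hAB g

end SwapVia

theorem eventually_subset_ball_of_tendsto {ι X : Type*} [PseudoMetricSpace X] {l : Filter ι}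
    {S : ι → Set X} {x : X} (hS : ∀ i, Bornology.IsBounded (S i))
    (hdiam : Tendsto (fun i => diam (S i)) l (𝓝 0))
    (hdist : Tendsto (fun i => infDist x (S i)) l (𝓝 0)) {r : ℝ} (hr : 0 < r) :
    ∀ᶠ i in l, S i ⊆ ball x r := by
  have hsum : Tendsto (fun i => infDist x (S i) + diam (S i)) l (𝓝 0) := by
    simpa using hdist.add hdiam
  filter_upwards [hsum.eventually_lt_const hr] with i hi y hy
  exact mem_ball'.2 ((dist_le_infDist_add_diam (hS i) hy).trans_lt hi)

theorem Homeomorph.isBounded_of_compactSpace {X Y : Type*} [PseudoMetricSpace X]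
    [TopologicalSpace Y] [CompactSpace Y] {s : Set X} (e : s ≃ₜ Y) : Bornology.IsBounded s :=
  (isCompact_iff_compactSpace.2 e.symm.compactSpace).isBounded

theorem exists_homeo_moving_far_general {X : Type*} [MetricSpace X]
    (C : Set X)
    (x : Fin 2 → X) (hxC : ∀ i, x i ∈ C)
    (S : Fin 2 → ℕ → Set X)
    (hclopen : ∀ i n, IsClopen (S i n))
    (hcirc : ∀ i n, Nonempty (S i n ≃ₜ Circle))
    (hdisj : ∀ i n j m, (i, n) ≠ (j, m) → Disjoint (S i n) (S j m))
    (hdiam : ∀ i, Filter.Tendsto (fun n => Metric.diam (S i n)) Filter.atTop (nhds 0))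
    (hdist : ∀ i,
      Filter.Tendsto (fun n => Metric.infDist (x i) (S i n)) Filter.atTop (nhds 0)) :
    ∀ δ : ℝ, 0 < δ → δ ≤ dist (x 0) (x 1) / 2 →
      ∃ h : X ≃ₜ X, (∀ y : X, δ ≤ Metric.infDist y C → h y = y) ∧
        ∃ y : X, dist (x 0) (x 1) / 2 ≤ dist (h y) y := by
  intro δ hδ hδle
  have near : ∀ i, ∃ n, S i n ⊆ ball (x i) (δ / 2) := fun i =>
    (eventually_subset_ball_of_tendsto (fun n => (hcirc i n).some.isBounded_of_compactSpace)
      (hdiam i) (hdist i) (half_pos hδ)).exists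
  obtain ⟨n₀, hn₀⟩ := near 0
  obtain ⟨n₁, hn₁⟩ := near 1
  obtain ⟨e₀⟩ := hcirc 0 n₀
  obtain ⟨e₁⟩ := hcirc 1 n₁
  let h := Homeomorph.swapVia (hclopen 0 n₀) (hclopen 1 n₁) (hdisj 0 n₀ 1 n₁ (by simp))
    (e₀.trans e₁.symm)
  have far_from_C : ∀ {y} i n, S i n ⊆ ball (x i) (δ / 2) → δ ≤ infDist y C → y ∉ S i n :=
    fun i _ hn hy hyS => hy.not_gt <|
      (infDist_le_dist_of_mem (hxC i)).trans_lt ((hn hyS).trans (half_lt_self hδ))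
  obtain ⟨y, hy⟩ : (S 0 n₀).Nonempty := ⟨_, (e₀.symm 1).2⟩
  refine ⟨h, fun z hz => swapVia_of_notMem _ (far_from_C 0 n₀ hn₀ hz) (far_from_C 1 n₁ hn₁ hz),
    y, ?_⟩
  have hhy : h y ∈ S 1 n₁ := by
    rw [show h y = _ from swapVia_of_mem_left _ hy]
    exact Subtype.prop _
  have hy₀ : dist y (x 0) < δ / 2 := hn₀ hy
  have hy₁ : dist (h y) (x 1) < δ / 2 := hn₁ hhy
  linarith [dist_triangle4 (x 0) y (h y) (x 1), dist_comm (x 0) y, dist_comm y (h y)]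

/-- If two distinct points of `C` are limits of pairwise disjoint clopen circles, then
for `ε = d(x₀,x₁)/2` and any `0 < δ ≤ ε` there is a homeomorphism of `X` which is the
identity outside the `δ`-neighborhood of `C` but moves some point a distance at
least `ε`. -/
theorem exists_homeo_moving_far {X : Type*} [MetricSpace X] [CompactSpace X]
    (C : Set X) (hC : IsClosed C)
    (x : Fin 2 → X) (hxC : ∀ i, x i ∈ C) (hne : x 0 ≠ x 1)
    (S : Fin 2 → ℕ → Set X)
    (hclopen : ∀ i n, IsClopen (S i n))
    (hcirc : ∀ i n, Nonempty (S i n ≃ₜ Circle))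
    (hdisj : ∀ i n j m, (i, n) ≠ (j, m) → Disjoint (S i n) (S j m))
    (hdiam : ∀ i, Filter.Tendsto (fun n => Metric.diam (S i n)) Filter.atTop (nhds 0))
    (hdist : ∀ i,
      Filter.Tendsto (fun n => Metric.infDist (x i) (S i n)) Filter.atTop (nhds 0)) :
    ∀ δ : ℝ, 0 < δ → δ ≤ dist (x 0) (x 1) / 2 →
      ∃ h : X ≃ₜ X, (∀ y : X, δ ≤ Metric.infDist y C → h y = y) ∧
        ∃ y : X, dist (x 0) (x 1) / 2 ≤ dist (h y) y :=
  exists_homeo_moving_far_general C x hxC S hclopen hcirc hdisj hdiam hdist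
end
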